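/- Simplification of the fluid Neumann operator at a flat interface: Let U ⊆ ℝ³ be open, let u : U → ℝ³ and p⁰, Φ, ρ, γ : U → ℝ be C¹ with ∇p⁰ = −ρ∇Φ on U, and set κ = γ p⁰. Let ν = e₃, and define the tangential gradient ∇_Γ f = (∂₁f, ∂₂f, 0) and tangential divergence ∇_Γ·w = ∂₁w₁ + ∂₂w₂. Then at every point of U: p⁰(γ−1)(∇·u)ν + p⁰ ∇⟨u, ν⟩ + (∇_Γ·(p⁰ u)) ν − p⁰ ∇_Γ⟨u, ν⟩ = κ(∇·u)ν − ρ⟨∇Φ, u⟩ν + ρ⟨∇Φ, ν⟩⟨u, ν⟩ν. Moreover, if in addition ∇Φ is parallel to ν at a point, then the right-hand side at that point equals κ(∇·u)ν − ρ⟨∇Φ, u⟩ν + ρ⟨u, ν⟩∇Φ. -/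

import Mathlib

/-!
The hydrostatic balance `∇p⁰ = −ρ∇Φ` turns the tangential part of the product rule,
`∇_Γ·(p⁰u) = ⟨∇_Γ p⁰, u⟩ + p⁰ ∇_Γ·u`, into `−ρ(∂₁Φ u₁ + ∂₂Φ u₂) + p⁰ ∇_Γ·u`. In the
normal component the tangential divergence then completes `p⁰(γ−1)∇·u + p⁰∂₃u₃` to
`γp⁰ ∇·u`, and the missing normal term of `⟨∇Φ, u⟩` is the `ρ ∂₃Φ u₃` on the right; the
tangential components cancel outright. When `∂₁Φ = ∂₂Φ = 0`, the vector `∂₃Φ ν` is `∇Φ`.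
-/

noncomputable section

/-- `i`-th coordinate unit vector of `ℝ³`. -/
def e3 (i : Fin 3) : EuclideanSpace ℝ (Fin 3) := EuclideanSpace.single i 1

/-- First partial derivative `∂f/∂x_i` at `x`. -/
def pd (f : EuclideanSpace ℝ (Fin 3) → ℝ) (x : EuclideanSpace ℝ (Fin 3)) (i : Fin 3) : ℝ :=
  fderiv ℝ f x (e3 i)

/-- The unit normal `ν = e₃` of the flattened interface `Γ = {x₃ = 0}`, as the
`i`-th component. -/
def nu (i : Fin 3) : ℝ := if i = 2 then 1 else 0

lemma pd_mul {f g : EuclideanSpace ℝ (Fin 3) → ℝ} {x : EuclideanSpace ℝ (Fin 3)}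
    (hf : DifferentiableAt ℝ f x) (hg : DifferentiableAt ℝ g x) (i : Fin 3) :
    pd (fun y => f y * g y) x i = pd f x i * g x + f x * pd g x i := by
  simp only [pd, fderiv_fun_mul hf hg, add_apply, smul_apply, smul_eq_mul]
  ring

lemma tangential_div_mul_of_hydrostatic {p0 Φ ρ : EuclideanSpace ℝ (Fin 3) → ℝ}
    {u : EuclideanSpace ℝ (Fin 3) → Fin 3 → ℝ} {x : EuclideanSpace ℝ (Fin 3)}
    (hp0 : DifferentiableAt ℝ p0 x) (hu : ∀ j, DifferentiableAt ℝ (fun y => u y j) x)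
    (hpress : ∀ i, pd p0 x i = -(ρ x * pd Φ x i)) :
    pd (fun y => p0 y * u y 0) x 0 + pd (fun y => p0 y * u y 1) x 1
      = -ρ x * (pd Φ x 0 * u x 0 + pd Φ x 1 * u x 1)
        + p0 x * (pd (fun y => u y 0) x 0 + pd (fun y => u y 1) x 1) := by
  rw [pd_mul hp0 (hu 0), pd_mul hp0 (hu 1), hpress, hpress]
  ring

theorem fluid_neumann_operator_simplification_general
    (U : Set (EuclideanSpace ℝ (Fin 3))) (hU : IsOpen U)
    (u : EuclideanSpace ℝ (Fin 3) → Fin 3 → ℝ)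
    (p0 Φ ρ γ : EuclideanSpace ℝ (Fin 3) → ℝ)
    (hu : ∀ i, ContDiffOn ℝ 1 (fun x => u x i) U)
    (hp0 : ContDiffOn ℝ 1 p0 U)
    (hpress : ∀ x ∈ U, ∀ i, pd p0 x i = -(ρ x * pd Φ x i)) :
    (∀ x ∈ U, ∀ i : Fin 3,
      p0 x * (γ x - 1) * (∑ j, pd (fun y => u y j) x j) * nu i
        + p0 x * pd (fun y => u y 2) x i
        + (pd (fun y => p0 y * u y 0) x 0 + pd (fun y => p0 y * u y 1) x 1) * nu i
        - p0 x * (if i = 2 then (0 : ℝ) else pd (fun y => u y 2) x i)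
      = (γ x * p0 x) * (∑ j, pd (fun y => u y j) x j) * nu i
        - ρ x * (∑ j, pd Φ x j * u x j) * nu i
        + ρ x * pd Φ x 2 * u x 2 * nu i)
    ∧ (∀ x ∈ U, pd Φ x 0 = 0 → pd Φ x 1 = 0 → ∀ i : Fin 3,
        (γ x * p0 x) * (∑ j, pd (fun y => u y j) x j) * nu i
          - ρ x * (∑ j, pd Φ x j * u x j) * nu i
          + ρ x * pd Φ x 2 * u x 2 * nu i
        = (γ x * p0 x) * (∑ j, pd (fun y => u y j) x j) * nu i
          - ρ x * (∑ j, pd Φ x j * u x j) * nu i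
          + ρ x * u x 2 * pd Φ x i) := by
  refine ⟨fun x hx i => ?_, fun x _ hΦ0 hΦ1 i => ?_⟩
  · have hdiff {f : EuclideanSpace ℝ (Fin 3) → ℝ} (hf : ContDiffOn ℝ 1 f U) :
        DifferentiableAt ℝ f x :=
      (hf.contDiffAt (hU.mem_nhds hx)).differentiableAt one_ne_zero
    rw [tangential_div_mul_of_hydrostatic (hdiff hp0) (fun j => hdiff (hu j)) (hpress x hx)]
    fin_cases i <;> simp [nu, Fin.sum_univ_three]
    ring
  · fin_cases i <;> simp [nu, hΦ0, hΦ1]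
    ring

/-- Simplification of the fluid Neumann operator at a flat interface: with
`∇p⁰ = −ρ∇Φ` and `κ = γp⁰`, at every point of `U`,
`p⁰(γ−1)(∇·u)ν + p⁰∇⟨u,ν⟩ + (∇_Γ·(p⁰u))ν − p⁰∇_Γ⟨u,ν⟩
  = κ(∇·u)ν − ρ⟨∇Φ,u⟩ν + ρ⟨∇Φ,ν⟩⟨u,ν⟩ν`,
and if moreover `∇Φ` is parallel to `ν` at a point (its tangential components vanish),
the right-hand side there equals `κ(∇·u)ν − ρ⟨∇Φ,u⟩ν + ρ⟨u,ν⟩∇Φ`. -/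
theorem fluid_neumann_operator_simplification
    (U : Set (EuclideanSpace ℝ (Fin 3))) (hU : IsOpen U)
    (u : EuclideanSpace ℝ (Fin 3) → Fin 3 → ℝ)
    (p0 Φ ρ γ : EuclideanSpace ℝ (Fin 3) → ℝ)
    (hu : ∀ i, ContDiffOn ℝ 1 (fun x => u x i) U)
    (hp0 : ContDiffOn ℝ 1 p0 U) (hΦ : ContDiffOn ℝ 1 Φ U)
    (hρ : ContDiffOn ℝ 1 ρ U) (hγ : ContDiffOn ℝ 1 γ U)
    (hpress : ∀ x ∈ U, ∀ i, pd p0 x i = -(ρ x * pd Φ x i)) :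
    (∀ x ∈ U, ∀ i : Fin 3,
      p0 x * (γ x - 1) * (∑ j, pd (fun y => u y j) x j) * nu i
        + p0 x * pd (fun y => u y 2) x i
        + (pd (fun y => p0 y * u y 0) x 0 + pd (fun y => p0 y * u y 1) x 1) * nu i
        - p0 x * (if i = 2 then (0 : ℝ) else pd (fun y => u y 2) x i)
      = (γ x * p0 x) * (∑ j, pd (fun y => u y j) x j) * nu i
        - ρ x * (∑ j, pd Φ x j * u x j) * nu i
        + ρ x * pd Φ x 2 * u x 2 * nu i)
    ∧ (∀ x ∈ U, pd Φ x 0 = 0 → pd Φ x 1 = 0 → ∀ i : Fin 3,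
        (γ x * p0 x) * (∑ j, pd (fun y => u y j) x j) * nu i
          - ρ x * (∑ j, pd Φ x j * u x j) * nu i
          + ρ x * pd Φ x 2 * u x 2 * nu i
        = (γ x * p0 x) * (∑ j, pd (fun y => u y j) x j) * nu i
          - ρ x * (∑ j, pd Φ x j * u x j) * nu i
          + ρ x * u x 2 * pd Φ x i) :=
  fluid_neumann_operator_simplification_general U hU u p0 Φ ρ γ hu hp0 hpress
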